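/- arXiv:0901.1277 — 5 statements merged into one kernel-verified Lean document; each statement's English description precedes it below -/
import Mathlib

section
/- Let a, b > 0 with a^2 > 4b, and let Y be the solution of y'' + a y' + b y = 0 with Y(0) = 0, Y'(0) = 1. Then for every t ≥ 0, ∫₀ᵗ |Y'(s)| ds ≤ 2a / (√(a²-4b) · (a - √(a²-4b))). -/
/-!
Factor the characteristic polynomial as (X - r₁)(X - r₂) with r₂ < r₁ < 0. For each root r,
the quantity Y' - r Y solves a first-order equation, so Y' - r₁ Y and Y' - r₂ Y are explicit
exponentials, which gives Y' = (r₁ e^{r₁ t} - r₂ e^{r₂ t}) / (r₁ - r₂). Both terms are derivatives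
of decreasing positive exponentials, so ∫₀ᵗ |Y'| ≤ 2 / (r₁ - r₂) = 2 / √(a² - 4b), which is at most
the claimed bound because a / (a - √(a² - 4b)) ≥ 1.
-/

open Real

section SecondOrderODE

variable {a b : ℝ} {Y : ℝ → ℝ}

theorem deriv_sub_mul_eq_exp_mul_of_ode (hY1 : Differentiable ℝ Y)
    (hY2 : Differentiable ℝ (deriv Y))
    (hode : ∀ t, deriv (deriv Y) t + a * deriv Y t + b * Y t = 0)
    {r c : ℝ} (hsum : r + c = -a) (hmul : r * c = b) (t : ℝ) :
    deriv Y t - r * Y t = exp (c * t) * (deriv Y 0 - r * Y 0) := by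
  set g : ℝ → ℝ := fun t => exp (-c * t) * (deriv Y t - r * Y t)
  have hg : ∀ s, HasDerivAt g 0 s := by
    intro s
    have hexp : HasDerivAt (fun x => exp (-c * x)) (exp (-c * s) * -c) s := by
      simpa using ((hasDerivAt_id s).const_mul (-c)).exp
    have hlin : HasDerivAt (fun x => deriv Y x - r * Y x)
        (deriv (deriv Y) s - r * deriv Y s) s :=
      (hY2 s).hasDerivAt.sub ((hY1 s).hasDerivAt.const_mul r)
    refine (hexp.mul hlin).congr_deriv ?_
    linear_combination exp (-c * s) * hode s - exp (-c * s) * deriv Y s * hsum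
      + exp (-c * s) * Y s * hmul
  have hconst : g t = g 0 :=
    is_const_of_deriv_eq_zero (fun s => (hg s).differentiableAt) (fun s => (hg s).deriv) t 0
  calc deriv Y t - r * Y t = exp (c * t) * g t := by
        simp only [g, ← mul_assoc, ← exp_add, neg_mul, add_neg_cancel, exp_zero, one_mul]
    _ = exp (c * t) * (deriv Y 0 - r * Y 0) := by rw [hconst]; simp [g]

theorem deriv_eq_of_ode_of_roots (hY1 : Differentiable ℝ Y) (hY2 : Differentiable ℝ (deriv Y))
    (hode : ∀ t, deriv (deriv Y) t + a * deriv Y t + b * Y t = 0)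
    (h0 : Y 0 = 0) (h0' : deriv Y 0 = 1)
    {r₁ r₂ : ℝ} (hne : r₁ ≠ r₂) (hsum : r₁ + r₂ = -a) (hmul : r₁ * r₂ = b) (t : ℝ) :
    deriv Y t = (r₁ * exp (r₁ * t) - r₂ * exp (r₂ * t)) / (r₁ - r₂) := by
  have h₁ := deriv_sub_mul_eq_exp_mul_of_ode hY1 hY2 hode hsum hmul t
  have h₂ := deriv_sub_mul_eq_exp_mul_of_ode hY1 hY2 hode (r := r₂) (c := r₁)
    (by linarith) (by linarith [mul_comm r₁ r₂]) t
  rw [h0, h0'] at h₁ h₂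
  rw [eq_div_iff (sub_ne_zero.mpr hne)]
  linear_combination r₁ * h₂ - r₂ * h₁

end SecondOrderODE

theorem integral_neg_mul_exp_mul (r t : ℝ) :
    ∫ s in (0 : ℝ)..t, -(r * exp (r * s)) = 1 - exp (r * t) := by
  have hderiv : ∀ s, HasDerivAt (fun x => -exp (r * x)) (-(r * exp (r * s))) s := fun s => by
    simpa [mul_comm] using ((hasDerivAt_id s).const_mul r).exp.fun_neg
  rw [intervalIntegral.integral_eq_sub_of_hasDerivAt (fun s _ => hderiv s)
    ((by fun_prop : Continuous fun s => -(r * exp (r * s))).intervalIntegrable _ _)]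
  simp only [mul_zero, exp_zero]
  ring

theorem integral_abs_sub_mul_exp_le_two {r₁ r₂ t : ℝ} (hr₁ : r₁ < 0) (hr₂ : r₂ < 0) (ht : 0 ≤ t) :
    ∫ s in (0 : ℝ)..t, |r₁ * exp (r₁ * s) - r₂ * exp (r₂ * s)| ≤ 2 := by
  have hle : ∀ s, |r₁ * exp (r₁ * s) - r₂ * exp (r₂ * s)|
      ≤ -(r₁ * exp (r₁ * s)) + -(r₂ * exp (r₂ * s)) := fun s => by
    have h₁ : r₁ * exp (r₁ * s) < 0 := mul_neg_of_neg_of_pos hr₁ (exp_pos _)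
    have h₂ : r₂ * exp (r₂ * s) < 0 := mul_neg_of_neg_of_pos hr₂ (exp_pos _)
    rw [abs_le]
    constructor <;> linarith
  calc ∫ s in (0 : ℝ)..t, |r₁ * exp (r₁ * s) - r₂ * exp (r₂ * s)|
      ≤ ∫ s in (0 : ℝ)..t, (-(r₁ * exp (r₁ * s)) + -(r₂ * exp (r₂ * s))) :=
        intervalIntegral.integral_mono_on ht
          ((by fun_prop : Continuous fun s => |r₁ * exp (r₁ * s) - r₂ * exp (r₂ * s)|)
            |>.intervalIntegrable _ _)
          ((by fun_prop : Continuous fun s => -(r₁ * exp (r₁ * s)) + -(r₂ * exp (r₂ * s)))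
            |>.intervalIntegrable _ _) fun s _ => hle s
    _ = (1 - exp (r₁ * t)) + (1 - exp (r₂ * t)) := by
        rw [intervalIntegral.integral_add
          ((by fun_prop : Continuous fun s => -(r₁ * exp (r₁ * s))).intervalIntegrable _ _)
          ((by fun_prop : Continuous fun s => -(r₂ * exp (r₂ * s))).intervalIntegrable _ _),
          integral_neg_mul_exp_mul, integral_neg_mul_exp_mul]
    _ ≤ 2 := by linarith [exp_pos (r₁ * t), exp_pos (r₂ * t)]

/-- Overdamped case a² > 4b: ∫₀ᵗ |Y'| ≤ 2a / (√(a²-4b)(a - √(a²-4b))). -/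
theorem integral_abs_Y'_le (a b : ℝ) (ha : 0 < a) (hb : 0 < b) (hd : a ^ 2 > 4 * b)
    (Y : ℝ → ℝ)
    (hY1 : Differentiable ℝ Y) (hY2 : Differentiable ℝ (deriv Y))
    (hode : ∀ t : ℝ, deriv (deriv Y) t + a * deriv Y t + b * Y t = 0)
    (h0 : Y 0 = 0) (h0' : deriv Y 0 = 1) :
    ∀ t ≥ (0 : ℝ), (∫ s in (0 : ℝ)..t, |deriv Y s|) ≤
      2 * a / (Real.sqrt (a ^ 2 - 4 * b) * (a - Real.sqrt (a ^ 2 - 4 * b))) := by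
  intro t ht
  set δ := √(a ^ 2 - 4 * b)
  have hδ : 0 < δ := sqrt_pos.mpr (by linarith)
  have hδsq : δ ^ 2 = a ^ 2 - 4 * b := sq_sqrt (by linarith)
  have hδa : δ < a := by nlinarith
  have hY' := deriv_eq_of_ode_of_roots hY1 hY2 hode h0 h0'
    (r₁ := (-a + δ) / 2) (r₂ := (-a - δ) / 2) (by linarith) (by ring)
    (by linear_combination -hδsq / 4)
  calc ∫ s in (0 : ℝ)..t, |deriv Y s|
      = (∫ s in (0 : ℝ)..t, |(-a + δ) / 2 * exp ((-a + δ) / 2 * s)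
          - (-a - δ) / 2 * exp ((-a - δ) / 2 * s)|) / δ := by
        simp only [hY', abs_div, abs_of_pos (show 0 < (-a + δ) / 2 - (-a - δ) / 2 by linarith),
          intervalIntegral.integral_div]
        ring_nf
    _ ≤ 2 / δ := by
        gcongr
        exact integral_abs_sub_mul_exp_le_two (by linarith) (by linarith) ht
    _ ≤ 2 * a / (δ * (a - δ)) := by
        rw [div_le_div_iff₀ hδ (mul_pos hδ (by linarith))]
        nlinarith
end

section
/- Let a, b > 0 with a² ≥ 4b, and suppose 0 ≤ τ with τ b < a. Then for the autonomous delay equation x''(t) + a x'(t) + b x(t-τ) = 0, every root λ ∈ ℂ of the characteristic equation λ² + aλ + b e^{-λτ} = 0 satisfies Re λ < 0. -/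
/-!
Suppose `Re λ ≥ 0`. On the half-plane `Re w ≤ 0` the exponential is 1-Lipschitz, so
`|1 - e^{-λτ}| ≤ τ|λ|` and the characteristic equation gives `|λ² + aλ + b| ≤ τb|λ|`. On the other
hand `|λ² + aλ + b| ≥ a|λ|` whenever `Re λ ≥ 0`. Since `τb < a` this forces `λ = 0`, which is not
a root because `b ≠ 0`.
-/

open Complex

theorem Complex.norm_exp_sub_one_le_of_re_nonpos {z : ℂ} (hz : z.re ≤ 0) :
    ‖exp z - 1‖ ≤ ‖z‖ := by
  have h := (convex_halfSpace_re_le (0 : ℝ)).norm_image_sub_le_of_norm_hasDerivWithin_le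
    (f := exp) (C := 1) (fun w _ => (hasDerivAt_exp w).hasDerivWithinAt)
    (fun w hw => by rw [norm_exp]; exact Real.exp_le_one_iff.mpr hw)
    (show (0 : ℂ).re ≤ 0 by simp) hz
  simpa using h

/-- With `z = x + iy`, `|z² + az + b|² - a²|z|²` equals
`(x² - y² + b)² + 2ax³ + 2axy² + 2abx + 4x²y²`, a sum of nonnegative terms when `x ≥ 0`. -/
theorem Complex.mul_norm_le_norm_sq_add_mul_add {a b : ℝ} (ha : 0 ≤ a) (hb : 0 ≤ b) {z : ℂ}
    (hz : 0 ≤ z.re) : a * ‖z‖ ≤ ‖z ^ 2 + a * z + b‖ := by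
  refine le_of_pow_le_pow_left₀ two_ne_zero (norm_nonneg _) ?_
  rw [mul_pow, Complex.sq_norm, Complex.sq_norm, normSq_apply, normSq_apply]
  simp only [add_re, add_im, mul_re, mul_im, pow_two, ofReal_re, ofReal_im]
  nlinarith [sq_nonneg (z.re * z.re - z.im * z.im + b), mul_nonneg (mul_nonneg ha hz) hb,
    mul_nonneg (mul_nonneg ha hz) (mul_self_nonneg z.re),
    mul_nonneg (mul_nonneg ha hz) (mul_self_nonneg z.im),
    mul_nonneg (mul_self_nonneg z.re) (mul_self_nonneg z.im)]

theorem characteristic_roots_negative_general (a b τ : ℝ) (ha : 0 < a) (hb : 0 < b)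
    (hτ : 0 ≤ τ) (hτb : τ * b < a)
    (lam : ℂ)
    (hroot : lam ^ 2 + (a : ℂ) * lam + (b : ℂ) * Complex.exp (-lam * (τ : ℂ)) = 0) :
    lam.re < 0 := by
  by_contra! hre
  have hlower := mul_norm_le_norm_sq_add_mul_add ha.le hb.le hre
  have hupper : ‖lam ^ 2 + a * lam + b‖ ≤ τ * b * ‖lam‖ := by
    have hpoly : lam ^ 2 + a * lam + b = -(b * (exp (-lam * τ) - 1)) := by
      linear_combination hroot
    have hexp : ‖exp (-lam * τ) - 1‖ ≤ ‖-lam * τ‖ :=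
      norm_exp_sub_one_le_of_re_nonpos (by simpa using mul_nonneg hre hτ)
    rw [hpoly, norm_neg, norm_mul, norm_real, Real.norm_of_nonneg hb.le]
    calc b * ‖exp (-lam * τ) - 1‖ ≤ b * ‖-lam * τ‖ := by gcongr
      _ = τ * b * ‖lam‖ := by
        rw [norm_mul, norm_neg, norm_real, Real.norm_of_nonneg hτ]; ring
  have hlam : lam = 0 := norm_le_zero_iff.mp (by nlinarith [norm_nonneg lam])
  subst hlam
  simp [hb.ne'] at hroot

/-- Burton's condition: if a,b > 0, a² ≥ 4b, 0 ≤ τ and τb < a, then every root of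
λ² + aλ + b e^{-λτ} = 0 has negative real part. -/
theorem characteristic_roots_negative (a b τ : ℝ) (ha : 0 < a) (hb : 0 < b)
    (hd : a ^ 2 ≥ 4 * b) (hτ : 0 ≤ τ) (hτb : τ * b < a)
    (lam : ℂ)
    (hroot : lam ^ 2 + (a : ℂ) * lam + (b : ℂ) * Complex.exp (-lam * (τ : ℂ)) = 0) :
    lam.re < 0 :=
  characteristic_roots_negative_general a b τ ha hb hτ hτb lam hroot
end

section
/- Let a, b : [t₀,∞) → ℝ be measurable with a(t) ≥ a₀ > 0, b(t) ≥ b₀ > 0, b(t) ≤ B, and a₀² ≥ 4B. Then any solution Y(·,s) of y''(t) + a(t) y'(t) + b(t) y(t) = 0 for t ≥ s with y(s) = 0, y'(s) = 1 satisfies Y(t,s) > 0 for all t > s ≥ t₀. -/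
/-!
Put `μ = a₀ / 2` and `q = y' + μ y`. The equation gives
`q' = (μ - a) q + (μ a - μ² - b) y`, where `μ - a ≤ -a₀ / 2 < 0` and
`μ a - μ² - b ≥ a₀² / 4 - B ≥ 0`. So while `y ≥ 0`, `q` is increasing wherever it is negative,
and `q (s) = 1` keeps it nonnegative; then `e^{μ t} y` is nondecreasing, so `y` has no first zero
after `s`.
-/

open Set Filter Topology

theorem HasDerivAt.eventually_pos_nhdsGT {f : ℝ → ℝ} {f' x : ℝ} (hf : HasDerivAt f f' x)
    (hx : f x = 0) (hf' : 0 < f') : ∀ᶠ t in 𝓝[>] x, 0 < f t := by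
  filter_upwards [(hf.tendsto_slope.mono_left (nhdsGT_le_nhdsNE x)).eventually (lt_mem_nhds hf'),
    self_mem_nhdsWithin] with t hslope (hxt : x < t)
  rw [slope_def_field, hx, sub_zero] at hslope
  exact (div_pos_iff_of_pos_right (sub_pos.mpr hxt)).mp hslope

theorem image_nonneg_of_deriv_right_pos_of_neg {f f' : ℝ → ℝ} {u v : ℝ}
    (hf : ContinuousOn f (Icc u v)) (hf' : ∀ x ∈ Ico u v, HasDerivWithinAt f (f' x) (Ici x) x)
    (hu : 0 ≤ f u) (hpos : ∀ x ∈ Ico u v, f x < 0 → 0 < f' x) :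
    ∀ x ∈ Icc u v, 0 ≤ f x := by
  intro x hx
  refine neg_nonpos.mp (le_of_forall_pos_le_add fun ε hε => ?_)
  have hfence : (-f) x ≤ ε :=
    image_le_of_deriv_right_lt_deriv_boundary (B := fun _ => ε) (B' := 0) hf.neg
      (fun x hx => (hf' x hx).neg) (by change -f u ≤ ε; linarith) (fun _ => hasDerivAt_const _ _)
      (fun x hx hfx => neg_neg_iff_pos.mpr (hpos x hx (by change -f x = ε at hfx; linarith))) hx
  simpa using hfence

theorem pos_of_deriv_add_mul_nonneg {y y' : ℝ → ℝ} {μ u v : ℝ} (huv : u ≤ v)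
    (hy : ∀ t ∈ Icc u v, HasDerivAt y (y' t) t) (hq : ∀ t ∈ Icc u v, 0 ≤ y' t + μ * y t)
    (hu : 0 < y u) : 0 < y v := by
  have hz : ∀ t ∈ Icc u v, HasDerivAt (fun τ => Real.exp (μ * τ) * y τ)
      (Real.exp (μ * t) * (y' t + μ * y t)) t := by
    intro t ht
    have hexp : HasDerivAt (fun τ => Real.exp (μ * τ)) (Real.exp (μ * t) * μ) t := by
      simpa using ((hasDerivAt_id t).const_mul μ).exp
    exact (hexp.mul (hy t ht)).congr_deriv (by ring)
  have hmono : MonotoneOn (fun τ => Real.exp (μ * τ) * y τ) (Icc u v) :=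
    monotoneOn_of_hasDerivWithinAt_nonneg (convex_Icc u v)
      (fun t ht => (hz t ht).continuousAt.continuousWithinAt)
      (fun t ht => (hz t (interior_subset ht)).hasDerivWithinAt)
      (fun t ht => mul_nonneg (Real.exp_pos _).le (hq t (interior_subset ht)))
  have hz_pos : 0 < Real.exp (μ * v) * y v :=
    (mul_pos (Real.exp_pos _) hu).trans_le (hmono (left_mem_Icc.mpr huv) (right_mem_Icc.mpr huv) huv)
  exact pos_of_mul_pos_right hz_pos (Real.exp_pos _).le

theorem ContinuousOn.pos_of_pos_on_Ioo_imp_pos {y : ℝ → ℝ} {s t : ℝ} (hst : s < t)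
    (hy : ContinuousOn y (Icc s t)) (hinit : ∀ᶠ τ in 𝓝[>] s, 0 < y τ)
    (hstep : ∀ r ∈ Ioc s t, (∀ τ ∈ Ioo s r, 0 < y τ) → 0 < y r) : 0 < y t := by
  by_contra! hyt
  obtain ⟨u, hsu, hu⟩ := mem_nhdsGT_iff_exists_Ioo_subset.mp hinit
  obtain ⟨s', hss', hs'⟩ := exists_between (lt_min hsu hst)
  have hs'u : s' < u := hs'.trans_le (min_le_left u t)
  have hs't : s' ≤ t := (hs'.trans_le (min_le_right u t)).le
  set K := Icc s' t ∩ y ⁻¹' Iic 0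
  have hK : IsCompact K := isCompact_Icc.of_isClosed_subset
    ((hy.mono (Icc_subset_Icc_left hss'.le)).preimage_isClosed_of_isClosed isClosed_Icc
      isClosed_Iic) inter_subset_left
  have hKne : K.Nonempty := ⟨t, right_mem_Icc.mpr hs't, hyt⟩
  obtain ⟨⟨hs't₁, ht₁t⟩, hyt₁⟩ := hK.sInf_mem hKne
  refine (hstep (sInf K) ⟨hss'.trans_le hs't₁, ht₁t⟩ fun τ hτ => ?_).not_ge hyt₁
  rcases lt_or_ge τ s' with hτs' | hs'τ
  · exact hu ⟨hτ.1, hτs'.trans hs'u⟩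
  · by_contra! hyτ
    exact (csInf_le hK.bddBelow ⟨⟨hs'τ, hτ.2.le.trans ht₁t⟩, hyτ⟩).not_gt hτ.2

theorem hasDerivAt_deriv_add_mul_of_ode {a b y y' y'' : ℝ → ℝ} {t : ℝ} (μ : ℝ)
    (hy' : HasDerivAt y (y' t) t) (hy'' : HasDerivAt y' (y'' t) t)
    (hode : y'' t + a t * y' t + b t * y t = 0) :
    HasDerivAt (fun τ => y' τ + μ * y τ)
      ((μ - a t) * (y' t + μ * y t) + (μ * a t - μ ^ 2 - b t) * y t) t :=
  (hy''.add (hy'.const_mul μ)).congr_deriv (by linear_combination hode)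

theorem overdamped_rate_pos {a₀ B a b q y : ℝ} (ha₀ : 0 < a₀) (ha : a₀ ≤ a) (hb : b ≤ B)
    (hd : 4 * B ≤ a₀ ^ 2) (hy : 0 ≤ y) (hq : q < 0) :
    0 < (a₀ / 2 - a) * q + (a₀ / 2 * a - (a₀ / 2) ^ 2 - b) * y := by
  have hdamp : 0 < (a₀ / 2 - a) * q := mul_pos_of_neg_of_neg (by linarith) hq
  have hforce : 0 ≤ (a₀ / 2 * a - (a₀ / 2) ^ 2 - b) * y := mul_nonneg (by nlinarith) hy
  linarith

theorem nonautonomous_fundamental_positive_general (t₀ a₀ B : ℝ) (a b : ℝ → ℝ)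
    (ha₀ : 0 < a₀)
    (halow : ∀ t ≥ t₀, a₀ ≤ a t)
    (hbup : ∀ t ≥ t₀, b t ≤ B) (hd : a₀ ^ 2 ≥ 4 * B)
    (s : ℝ) (hs : t₀ ≤ s)
    (y y' y'' : ℝ → ℝ)
    (hy' : ∀ t ≥ s, HasDerivAt y (y' t) t)
    (hy'' : ∀ t ≥ s, HasDerivAt y' (y'' t) t)
    (hode : ∀ t ≥ s, y'' t + a t * y' t + b t * y t = 0)
    (h1 : y s = 0) (h2 : y' s = 1) :
    ∀ t > s, y t > 0 := by
  intro t hst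
  have hq := fun τ (hτ : τ ≥ s) =>
    hasDerivAt_deriv_add_mul_of_ode (a₀ / 2) (hy' τ hτ) (hy'' τ hτ) (hode τ hτ)
  refine ContinuousOn.pos_of_pos_on_Ioo_imp_pos hst
    (fun τ hτ => (hy' τ hτ.1).continuousAt.continuousWithinAt)
    ((hy' s le_rfl).eventually_pos_nhdsGT h1 (h2 ▸ one_pos)) fun r hr hpos => ?_
  have hy_nonneg : ∀ τ ∈ Ico s r, 0 ≤ y τ := fun τ hτ =>
    hτ.1.eq_or_lt.elim (fun h => h ▸ h1.ge) fun h => (hpos τ ⟨h, hτ.2⟩).le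
  have hq_nonneg : ∀ τ ∈ Icc s r, 0 ≤ y' τ + a₀ / 2 * y τ :=
    image_nonneg_of_deriv_right_pos_of_neg
      (fun τ hτ => (hq τ hτ.1).continuousAt.continuousWithinAt)
      (fun τ hτ => (hq τ hτ.1).hasDerivWithinAt) (by simp [h1, h2])
      fun τ hτ hneg => overdamped_rate_pos ha₀ (halow τ (hs.trans hτ.1))
        (hbup τ (hs.trans hτ.1)) hd (hy_nonneg τ hτ) hneg
  obtain ⟨m, hsm, hmr⟩ := exists_between hr.1
  exact pos_of_deriv_add_mul_nonneg hmr.le (fun τ hτ => hy' τ (hsm.le.trans hτ.1))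
    (fun τ hτ => hq_nonneg τ ⟨hsm.le.trans hτ.1, hτ.2⟩) (hpos m ⟨hsm, hmr⟩)

/-- Positivity of the fundamental function of y'' + a(t) y' + b(t) y = 0
under the strong overdamping condition a₀² ≥ 4B. -/
theorem nonautonomous_fundamental_positive (t₀ a₀ b₀ B : ℝ) (a b : ℝ → ℝ)
    (hma : Measurable a) (hmb : Measurable b)
    (ha₀ : 0 < a₀) (hb₀ : 0 < b₀)
    (halow : ∀ t ≥ t₀, a₀ ≤ a t) (hblow : ∀ t ≥ t₀, b₀ ≤ b t)
    (hbup : ∀ t ≥ t₀, b t ≤ B) (hd : a₀ ^ 2 ≥ 4 * B)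
    (s : ℝ) (hs : t₀ ≤ s)
    (y y' y'' : ℝ → ℝ)
    (hy' : ∀ t ≥ s, HasDerivAt y (y' t) t)
    (hy'' : ∀ t ≥ s, HasDerivAt y' (y'' t) t)
    (hode : ∀ t ≥ s, y'' t + a t * y' t + b t * y t = 0)
    (h1 : y s = 0) (h2 : y' s = 1) :
    ∀ t > s, y t > 0 :=
  nonautonomous_fundamental_positive_general t₀ a₀ B a b ha₀ halow hbup hd s hs y y' y'' hy' hy''
    hode h1 h2
end

section
/- Let a, b, a₁, b₁ be real constants with a > 0, b > 0, a² > 4b, and suppose (2a / (√(a²-4b)(a - √(a²-4b)))) |a₁| + (1/b) |b₁| < 1. Let Y solve y'' + ay' + by = 0, Y(0)=0, Y'(0)=1. Then the linear operator H on bounded measurable functions z : [0,∞) → ℝ defined by (Hz)(t) = a₁ ∫₀ᵗ Y'(t-s) z(s) ds + b₁ ∫₀ᵗ Y(t-s) z(s) ds satisfies ‖Hz‖_∞ ≤ q ‖z‖_∞ for q := (2a / (√(a²-4b)(a-√(a²-4b)))) |a₁| + (1/b)|b₁| < 1. -/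
/-!
Since a² > 4b, the characteristic polynomial x² + ax + b has two roots r₂ < r₁ < 0, and
factoring the equation as (d/dt - r)(d/dt - ρ)Y = 0 shows Y = (e^{r₁t} - e^{r₂t})/(r₁ - r₂).
Hence Y ≥ 0 with ∫₀ᵗ Y ≤ 1/(r₁r₂) = 1/b, and |Y'| ≤ (|r₁|e^{r₁t} + |r₂|e^{r₂t})/(r₁ - r₂) gives
∫₀ᵗ |Y'| ≤ 2/√(a² - 4b), which is at most the constant of the statement. Each convolution
integral is bounded by sup |z| times the L¹ norm of its kernel.
-/

open MeasureTheory Real Set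

theorem eq_exp_mul_of_hasDerivAt {g : ℝ → ℝ} {ρ : ℝ} (hg : ∀ t, HasDerivAt g (ρ * g t) t)
    (t : ℝ) : g t = exp (ρ * t) * g 0 := by
  have hderiv : ∀ s, HasDerivAt (fun s => exp (-ρ * s) * g s) 0 s := fun s =>
    (((hasDerivAt_id' s).const_mul (-ρ)).exp.mul (hg s)).congr_deriv (by ring)
  have hconst := is_const_of_deriv_eq_zero (fun s => (hderiv s).differentiableAt)
    (fun s => (hderiv s).deriv) t 0
  simp only [mul_zero, exp_zero, one_mul] at hconst
  rw [← hconst, ← mul_assoc, ← exp_add]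
  simp

noncomputable def fundamentalSolution (r₁ r₂ t : ℝ) : ℝ :=
  (exp (r₁ * t) - exp (r₂ * t)) / (r₁ - r₂)

theorem hasDerivAt_fundamentalSolution (r₁ r₂ t : ℝ) :
    HasDerivAt (fundamentalSolution r₁ r₂)
      ((r₁ * exp (r₁ * t) - r₂ * exp (r₂ * t)) / (r₁ - r₂)) t := by
  have h (r : ℝ) : HasDerivAt (fun t => exp (r * t)) (r * exp (r * t)) t := by
    simpa [mul_comm] using ((hasDerivAt_id t).const_mul r).exp
  exact ((h r₁).sub (h r₂)).div_const _

theorem deriv_fundamentalSolution (r₁ r₂ : ℝ) :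
    deriv (fundamentalSolution r₁ r₂)
      = fun t => (r₁ * exp (r₁ * t) - r₂ * exp (r₂ * t)) / (r₁ - r₂) :=
  funext fun t => (hasDerivAt_fundamentalSolution r₁ r₂ t).deriv

theorem integral_exp_mul {r : ℝ} (hr : r ≠ 0) (t : ℝ) :
    ∫ u in (0 : ℝ)..t, exp (r * u) = (exp (r * t) - 1) / r := by
  rw [intervalIntegral.integral_comp_mul_left (fun u => exp u) hr, integral_exp]
  simp [div_eq_inv_mul]

theorem neg_mul_integral_exp_mul_le_one {r : ℝ} (hr : r < 0) (t : ℝ) :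
    -r * ∫ u in (0 : ℝ)..t, exp (r * u) ≤ 1 := by
  rw [integral_exp_mul hr.ne, mul_div_assoc', div_le_one_of_neg hr]
  nlinarith [exp_pos (r * t)]

section Bounds

variable {r₁ r₂ t : ℝ}

theorem integral_fundamentalSolution (h₁ : r₁ ≠ 0) (h₂ : r₂ ≠ 0) :
    ∫ u in (0 : ℝ)..t, fundamentalSolution r₁ r₂ u
      = ((exp (r₁ * t) - 1) / r₁ - (exp (r₂ * t) - 1) / r₂) / (r₁ - r₂) := by
  have hc (r : ℝ) : IntervalIntegrable (fun u => exp (r * u)) volume 0 t :=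
    (by fun_prop : Continuous fun u => exp (r * u)).intervalIntegrable 0 t
  simp only [fundamentalSolution]
  rw [intervalIntegral.integral_div, intervalIntegral.integral_sub (hc r₁) (hc r₂),
    integral_exp_mul h₁, integral_exp_mul h₂]

theorem fundamentalSolution_nonneg (h : r₂ < r₁) (ht : 0 ≤ t) :
    0 ≤ fundamentalSolution r₁ r₂ t :=
  div_nonneg (sub_nonneg.mpr (exp_le_exp.mpr (mul_le_mul_of_nonneg_right h.le ht)))
    (sub_pos.mpr h).le

theorem integral_abs_fundamentalSolution_le (h : r₂ < r₁) (h₁ : r₁ < 0) (ht : 0 ≤ t) :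
    ∫ u in (0 : ℝ)..t, |fundamentalSolution r₁ r₂ u| ≤ 1 / (r₁ * r₂) := by
  have h₂ : r₂ < 0 := h.trans h₁
  rw [intervalIntegral.integral_congr (g := fundamentalSolution r₁ r₂) fun u hu =>
      abs_of_nonneg (fundamentalSolution_nonneg h (by rw [uIcc_of_le ht] at hu; exact hu.1)),
    integral_fundamentalSolution h₁.ne h₂.ne,
    div_le_div_iff₀ (sub_pos.mpr h) (mul_pos_of_neg_of_neg h₁ h₂)]
  have hexp : exp (r₂ * t) ≤ exp (r₁ * t) := exp_le_exp.mpr (mul_le_mul_of_nonneg_right h.le ht)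
  have hcross : -r₁ * exp (r₂ * t) ≤ -r₂ * exp (r₁ * t) :=
    mul_le_mul (by linarith) hexp (exp_pos _).le (by linarith)
  have hclear : ((exp (r₁ * t) - 1) / r₁ - (exp (r₂ * t) - 1) / r₂) * (r₁ * r₂)
      = r₂ * (exp (r₁ * t) - 1) - r₁ * (exp (r₂ * t) - 1) := by
    field_simp [h₁.ne, h₂.ne]
  rw [hclear]
  linarith

theorem integral_abs_deriv_fundamentalSolution_le (h : r₂ < r₁) (h₁ : r₁ < 0) (ht : 0 ≤ t) :
    ∫ u in (0 : ℝ)..t, |deriv (fundamentalSolution r₁ r₂) u| ≤ 2 / (r₁ - r₂) := by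
  have h₂ : r₂ < 0 := h.trans h₁
  have hD : 0 < r₁ - r₂ := sub_pos.mpr h
  have hc (r : ℝ) : IntervalIntegrable (fun u => exp (r * u)) volume 0 t :=
    (by fun_prop : Continuous fun u => exp (r * u)).intervalIntegrable 0 t
  have hbound (u : ℝ) : |(r₁ * exp (r₁ * u) - r₂ * exp (r₂ * u)) / (r₁ - r₂)|
      ≤ (-r₁ * exp (r₁ * u) + -r₂ * exp (r₂ * u)) / (r₁ - r₂) := by
    rw [abs_div, abs_of_pos hD]
    refine div_le_div_of_nonneg_right ((abs_sub _ _).trans_eq ?_) hD.le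
    rw [abs_mul, abs_mul, abs_of_neg h₁, abs_of_neg h₂, abs_of_pos (exp_pos _),
      abs_of_pos (exp_pos _)]
  rw [deriv_fundamentalSolution]
  calc ∫ u in (0 : ℝ)..t, |(r₁ * exp (r₁ * u) - r₂ * exp (r₂ * u)) / (r₁ - r₂)|
      ≤ ∫ u in (0 : ℝ)..t, (-r₁ * exp (r₁ * u) + -r₂ * exp (r₂ * u)) / (r₁ - r₂) :=
        intervalIntegral.integral_mono_on ht
          ((by fun_prop : Continuous fun u => _).intervalIntegrable 0 t)
          ((by fun_prop : Continuous fun u => _).intervalIntegrable 0 t) fun u _ => hbound u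
    _ = ((-r₁ * ∫ u in (0 : ℝ)..t, exp (r₁ * u)) + (-r₂ * ∫ u in (0 : ℝ)..t, exp (r₂ * u)))
          / (r₁ - r₂) := by
        rw [intervalIntegral.integral_div, intervalIntegral.integral_add ((hc r₁).const_mul _)
          ((hc r₂).const_mul _), intervalIntegral.integral_const_mul,
          intervalIntegral.integral_const_mul]
    _ ≤ (1 + 1) / (r₁ - r₂) := by
        gcongr
        exacts [neg_mul_integral_exp_mul_le_one h₁ t, neg_mul_integral_exp_mul_le_one h₂ t]
    _ = 2 / (r₁ - r₂) := by norm_num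

end Bounds

theorem deriv_sub_mul_eq_exp {Y : ℝ → ℝ} {a b r ρ : ℝ} (hY1 : Differentiable ℝ Y)
    (hY2 : Differentiable ℝ (deriv Y))
    (hode : ∀ t, deriv (deriv Y) t + a * deriv Y t + b * Y t = 0) (h0 : Y 0 = 0)
    (h0' : deriv Y 0 = 1) (hsum : r + ρ = -a) (hprod : r * ρ = b) (t : ℝ) :
    deriv Y t - r * Y t = exp (ρ * t) := by
  have hg : ∀ s, HasDerivAt (fun s => deriv Y s - r * Y s) (ρ * (deriv Y s - r * Y s)) s :=
    fun s => ((hY2 s).hasDerivAt.sub ((hY1 s).hasDerivAt.const_mul r)).congr_deriv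
      (by linear_combination hode s - deriv Y s * hsum + Y s * hprod)
  rw [eq_exp_mul_of_hasDerivAt hg t, h0, h0']
  ring

theorem eq_fundamentalSolution {Y : ℝ → ℝ} {a b r₁ r₂ : ℝ} (hY1 : Differentiable ℝ Y)
    (hY2 : Differentiable ℝ (deriv Y))
    (hode : ∀ t, deriv (deriv Y) t + a * deriv Y t + b * Y t = 0) (h0 : Y 0 = 0)
    (h0' : deriv Y 0 = 1) (hr : r₁ ≠ r₂) (hsum : r₁ + r₂ = -a) (hprod : r₁ * r₂ = b) :
    Y = fundamentalSolution r₁ r₂ := by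
  funext t
  have h₁ := deriv_sub_mul_eq_exp hY1 hY2 hode h0 h0' hsum hprod t
  have h₂ := deriv_sub_mul_eq_exp hY1 hY2 hode h0 h0' (r := r₂) (ρ := r₁)
    (by linarith) (by linarith) t
  rw [fundamentalSolution, eq_div_iff (sub_ne_zero.mpr hr)]
  linear_combination h₂ - h₁

theorem abs_integral_mul_sub_le {f z : ℝ → ℝ} {t C : ℝ} (ht : 0 ≤ t)
    (hf : IntervalIntegrable f volume 0 t) (hz : ∀ s ∈ Icc 0 t, |z s| ≤ C) :
    |∫ s in (0 : ℝ)..t, f (t - s) * z s| ≤ C * ∫ u in (0 : ℝ)..t, |f u| := by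
  have hf' : IntervalIntegrable (fun s => |f (t - s)| * C) volume 0 t := by
    have h := hf.abs.comp_sub_left t
    rw [sub_zero, sub_self] at h
    exact h.symm.mul_const C
  calc |∫ s in (0 : ℝ)..t, f (t - s) * z s|
      ≤ ∫ s in (0 : ℝ)..t, |f (t - s)| * C := by
        refine intervalIntegral.norm_integral_le_of_norm_le (f := fun s => f (t - s) * z s) ht
          (ae_of_all _ fun s hs => ?_) hf'
        rw [Real.norm_eq_abs, abs_mul]
        exact mul_le_mul_of_nonneg_left (hz s (Ioc_subset_Icc_self hs)) (abs_nonneg _)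
    _ = C * ∫ u in (0 : ℝ)..t, |f u| := by
        rw [intervalIntegral.integral_mul_const, intervalIntegral.integral_comp_sub_left
          (fun u => |f u|), sub_self, sub_zero, mul_comm]

theorem abs_add_integral_mul_sub_le {k₁ k₂ z : ℝ → ℝ} {a₁ b₁ t C K₁ K₂ : ℝ} (ht : 0 ≤ t)
    (hk₁ : IntervalIntegrable k₁ volume 0 t) (hk₂ : IntervalIntegrable k₂ volume 0 t)
    (hz : ∀ s ∈ Icc 0 t, |z s| ≤ C) (hK₁ : ∫ u in (0 : ℝ)..t, |k₁ u| ≤ K₁)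
    (hK₂ : ∫ u in (0 : ℝ)..t, |k₂ u| ≤ K₂) :
    |a₁ * (∫ s in (0 : ℝ)..t, k₁ (t - s) * z s) + b₁ * (∫ s in (0 : ℝ)..t, k₂ (t - s) * z s)|
      ≤ (K₁ * |a₁| + K₂ * |b₁|) * C := by
  have hC : 0 ≤ C := (abs_nonneg _).trans (hz 0 ⟨le_rfl, ht⟩)
  calc _ ≤ |a₁| * |∫ s in (0 : ℝ)..t, k₁ (t - s) * z s|
          + |b₁| * |∫ s in (0 : ℝ)..t, k₂ (t - s) * z s| := by
        rw [← abs_mul, ← abs_mul]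
        exact abs_add_le _ _
    _ ≤ |a₁| * (C * K₁) + |b₁| * (C * K₂) := by
        gcongr
        · exact (abs_integral_mul_sub_le ht hk₁ hz).trans (by gcongr)
        · exact (abs_integral_mul_sub_le ht hk₂ hz).trans (by gcongr)
    _ = _ := by ring

theorem operator_contraction_general (a b a₁ b₁ : ℝ) (ha : 0 < a) (hb : 0 < b)
    (hd : a ^ 2 > 4 * b)
    (Y : ℝ → ℝ)
    (hY1 : Differentiable ℝ Y) (hY2 : Differentiable ℝ (deriv Y))
    (hode : ∀ t : ℝ, deriv (deriv Y) t + a * deriv Y t + b * Y t = 0)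
    (h0 : Y 0 = 0) (h0' : deriv Y 0 = 1)
    (z : ℝ → ℝ) (C : ℝ)
    (hzb : ∀ t ≥ (0 : ℝ), |z t| ≤ C) :
    ∀ t ≥ (0 : ℝ),
      |a₁ * (∫ s in (0 : ℝ)..t, deriv Y (t - s) * z s)
          + b₁ * (∫ s in (0 : ℝ)..t, Y (t - s) * z s)|
        ≤ ((2 * a / (Real.sqrt (a ^ 2 - 4 * b) * (a - Real.sqrt (a ^ 2 - 4 * b)))) * |a₁|
            + (1 / b) * |b₁|) * C := by
  set D := √(a ^ 2 - 4 * b)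
  have hD : 0 < D := sqrt_pos.mpr (by linarith)
  have hDsq : D ^ 2 = a ^ 2 - 4 * b := sq_sqrt (by linarith)
  have hDa : D < a := by nlinarith
  have hroots : (-a - D) / 2 < (-a + D) / 2 ∧ (-a + D) / 2 < 0 := by constructor <;> linarith
  have hb' : b = (-a + D) / 2 * ((-a - D) / 2) := by linear_combination hDsq / 4
  have hY : Y = fundamentalSolution ((-a + D) / 2) ((-a - D) / 2) :=
    eq_fundamentalSolution hY1 hY2 hode h0 h0' (by linarith) (by ring) hb'.symm
  intro t ht
  refine abs_add_integral_mul_sub_le ht (hY2.continuous.intervalIntegrable 0 t)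
    (hY1.continuous.intervalIntegrable 0 t) (fun s hs => hzb s hs.1) ?_ ?_
  · calc ∫ u in (0 : ℝ)..t, |deriv Y u|
        ≤ 2 / ((-a + D) / 2 - (-a - D) / 2) := by
          rw [hY]
          exact integral_abs_deriv_fundamentalSolution_le hroots.1 hroots.2 ht
      _ = 2 / D := by ring
      _ ≤ 2 * a / (D * (a - D)) := by
          rw [div_le_div_iff₀ hD (mul_pos hD (by linarith))]
          nlinarith
  · rw [hY, hb']
    exact integral_abs_fundamentalSolution_le hroots.1 hroots.2 ht

/-- The contraction estimate for the operator
(Hz)(t) = a₁ ∫₀ᵗ Y'(t-s) z(s) ds + b₁ ∫₀ᵗ Y(t-s) z(s) ds in the overdamped case. -/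
theorem operator_contraction (a b a₁ b₁ : ℝ) (ha : 0 < a) (hb : 0 < b)
    (hd : a ^ 2 > 4 * b)
    (hq : (2 * a / (Real.sqrt (a ^ 2 - 4 * b) * (a - Real.sqrt (a ^ 2 - 4 * b)))) * |a₁|
        + (1 / b) * |b₁| < 1)
    (Y : ℝ → ℝ)
    (hY1 : Differentiable ℝ Y) (hY2 : Differentiable ℝ (deriv Y))
    (hode : ∀ t : ℝ, deriv (deriv Y) t + a * deriv Y t + b * Y t = 0)
    (h0 : Y 0 = 0) (h0' : deriv Y 0 = 1)
    (z : ℝ → ℝ) (hz : Measurable z) (C : ℝ)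
    (hzb : ∀ t ≥ (0 : ℝ), |z t| ≤ C) :
    ∀ t ≥ (0 : ℝ),
      |a₁ * (∫ s in (0 : ℝ)..t, deriv Y (t - s) * z s)
          + b₁ * (∫ s in (0 : ℝ)..t, Y (t - s) * z s)|
        ≤ ((2 * a / (Real.sqrt (a ^ 2 - 4 * b) * (a - Real.sqrt (a ^ 2 - 4 * b)))) * |a₁|
            + (1 / b) * |b₁|) * C :=
  operator_contraction_general a b a₁ b₁ ha hb hd Y hY1 hY2 hode h0 h0' z C hzb
end

section
/- Let a : [0,∞) → ℝ be measurable, bounded, nonnegative, and let g : [0,∞) → ℝ be measurable with g(t) ≤ t and t - g(t) ≤ δ for some δ > 0 with δ · (sup a) < 1. Suppose x : ℝ → ℝ is bounded on [0,T], differentiable with bounded derivative on [0,T], x(t)=x'(t)=0 for t ≤ 0, and satisfies x'(t) = F(t) + a(t)(x(t) - x(g(t))) on [0,T] with |F(t)| ≤ K. Then sup_{[0,T]} |x'| ≤ K / (1 - δ sup a). -/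
/-!
On `[0, T]` the delay term is controlled by the mean value theorem:
`|x t - x (g t)| ≤ (t - g t) · sup |x'| ≤ δ · sup |x'|`, where `x' = 0` on `(-∞, 0]` lets the
delay interval reach below `0`. Hence `sup |x'| ≤ K + δ A · sup |x'|`, and since `δ A < 1` this
self-referential bound can be solved for `sup |x'|`.
-/

open Set

theorem le_div_one_sub_of_forall_le_add_mul {α : Type*} {s : Set α} {f : α → ℝ} {K c : ℝ}
    (hc : c < 1) (hbdd : BddAbove (f '' s))
    (h : ∀ S, (∀ t ∈ s, f t ≤ S) → ∀ t ∈ s, f t ≤ K + c * S) :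
    ∀ t ∈ s, f t ≤ K / (1 - c) := by
  intro t ht
  have hsup : ∀ u ∈ s, f u ≤ sSup (f '' s) := fun u hu => le_csSup hbdd (mem_image_of_mem f hu)
  have hself : sSup (f '' s) ≤ K + c * sSup (f '' s) :=
    csSup_le ((nonempty_of_mem ht).image f) (forall_mem_image.2 (h _ hsup))
  calc f t ≤ sSup (f '' s) := hsup t ht
    _ ≤ K / (1 - c) := by rw [le_div_iff₀ (by linarith)]; linarith

theorem abs_sub_le_mul_of_abs_deriv_le {x x' : ℝ → ℝ} {u t S : ℝ} (hut : u ≤ t)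
    (hderiv : ∀ s ∈ Icc u t, HasDerivAt x (x' s) s) (hS : ∀ s ∈ Icc u t, |x' s| ≤ S) :
    |x t - x u| ≤ S * (t - u) :=
  norm_image_sub_le_of_norm_deriv_le_segment' (fun s hs => (hderiv s hs).hasDerivWithinAt)
    (fun s hs => hS s (Ico_subset_Icc_self hs)) t (right_mem_Icc.2 hut)

theorem apriori_derivative_estimate_general (a g F : ℝ → ℝ) (A δ K T : ℝ)
    (hA : ∀ t ≥ (0 : ℝ), a t ≤ A) (hapos : ∀ t ≥ (0 : ℝ), 0 ≤ a t)
    (hg : ∀ t ≥ (0 : ℝ), g t ≤ t)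
    (hgd : ∀ t ≥ (0 : ℝ), t - g t ≤ δ)
    (hsmall : δ * A < 1)
    (x x' : ℝ → ℝ)
    (hx'b : ∃ M : ℝ, ∀ t ∈ Set.Icc (0 : ℝ) T, |x' t| ≤ M)
    (hderiv : ∀ t ≤ T, HasDerivAt x (x' t) t)
    (hzero : ∀ t ≤ (0 : ℝ), x t = 0 ∧ x' t = 0)
    (hode : ∀ t ∈ Set.Icc (0 : ℝ) T, x' t = F t + a t * (x t - x (g t)))
    (hF : ∀ t ∈ Set.Icc (0 : ℝ) T, |F t| ≤ K) :
    ∀ t ∈ Set.Icc (0 : ℝ) T, |x' t| ≤ K / (1 - δ * A) := by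
  obtain ⟨M, hM⟩ := hx'b
  refine le_div_one_sub_of_forall_le_add_mul hsmall ⟨M, forall_mem_image.2 hM⟩ fun S hS t ht => ?_
  have hS0 : 0 ≤ S := (abs_nonneg _).trans (hS t ht)
  have hS_Iic : ∀ s ≤ T, |x' s| ≤ S := fun s hsT => by
    rcases le_or_gt s 0 with hs0 | hs0
    · rwa [(hzero s hs0).2, abs_zero]
    · exact hS s ⟨hs0.le, hsT⟩
  have hdelay : |x t - x (g t)| ≤ S * δ := calc
    _ ≤ S * (t - g t) := abs_sub_le_mul_of_abs_deriv_le (hg t ht.1)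
        (fun s hs => hderiv s (hs.2.trans ht.2)) (fun s hs => hS_Iic s (hs.2.trans ht.2))
    _ ≤ S * δ := mul_le_mul_of_nonneg_left (hgd t ht.1) hS0
  have ha := hapos t ht.1
  have hA0 : 0 ≤ A := ha.trans (hA t ht.1)
  rw [hode t ht]
  calc |F t + a t * (x t - x (g t))| ≤ |F t| + a t * |x t - x (g t)| :=
        (abs_add_le _ _).trans_eq (by rw [abs_mul, abs_of_nonneg ha])
    _ ≤ K + A * (S * δ) :=
        add_le_add (hF t ht) (mul_le_mul (hA t ht.1) hdelay (abs_nonneg _) hA0)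
    _ = K + δ * A * S := by ring

/-- A priori derivative estimate: from x'(t) = F(t) + a(t)(x(t) - x(g(t))) with
|F| ≤ K, t - g(t) ≤ δ, 0 ≤ a ≤ A and δA < 1, one gets sup_{[0,T]} |x'| ≤ K/(1-δA). -/
theorem apriori_derivative_estimate (a g F : ℝ → ℝ) (A δ K T : ℝ)
    (hma : Measurable a)
    (hA : ∀ t ≥ (0 : ℝ), a t ≤ A) (hapos : ∀ t ≥ (0 : ℝ), 0 ≤ a t)
    (hg : ∀ t ≥ (0 : ℝ), g t ≤ t) (hδ : 0 < δ)
    (hgd : ∀ t ≥ (0 : ℝ), t - g t ≤ δ)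
    (hsmall : δ * A < 1)
    (hT : 0 < T)
    (x x' : ℝ → ℝ)
    (hxb : ∃ M : ℝ, ∀ t ∈ Set.Icc (0 : ℝ) T, |x t| ≤ M)
    (hx'b : ∃ M : ℝ, ∀ t ∈ Set.Icc (0 : ℝ) T, |x' t| ≤ M)
    (hderiv : ∀ t ≤ T, HasDerivAt x (x' t) t)
    (hzero : ∀ t ≤ (0 : ℝ), x t = 0 ∧ x' t = 0)
    (hode : ∀ t ∈ Set.Icc (0 : ℝ) T, x' t = F t + a t * (x t - x (g t)))
    (hF : ∀ t ∈ Set.Icc (0 : ℝ) T, |F t| ≤ K) :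
    ∀ t ∈ Set.Icc (0 : ℝ) T, |x' t| ≤ K / (1 - δ * A) :=
  apriori_derivative_estimate_general a g F A δ K T hA hapos hg hgd hsmall x x' hx'b hderiv hzero
    hode hF
end
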